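/- arXiv:2405.01655 — 8 statements merged into one kernel-verified Lean document; each statement's English description precedes it below -/
import Mathlib

section
/- In the two-agent, two-state belief reporting game with log utility and the symmetric linear opinion pool, agent a's best response to report ρ_b is: 1 if ρ_b ≤ 2p_a − 1; 2p_a − ρ_b if 2p_a − 1 ≤ ρ_b ≤ 2p_a; and 0 if ρ_b ≥ 2p_a, where p_a is a's true probability of state 1. -/
/-- Two-state log payoff with convention `0 · ln 0 = 0`. -/
noncomputable def pay2 (p x : ℝ) : EReal :=
  (if x = 0 ∧ p ≠ 0 then (⊥ : EReal) else ((p * Real.log x : ℝ) : EReal)) +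
  (if x = 1 ∧ p ≠ 1 then (⊥ : EReal) else (((1 - p) * Real.log (1 - x) : ℝ) : EReal))

/-!
The payoff `pay2 p` is single-peaked on `[0, 1]`: its real part has derivative
`(p - x) / (x (1 - x))`, so it increases on `[0, p]` and decreases on `[p, 1]`.
Agent a's report `ρa ∈ [0, 1]` moves the pool `(ρa + ρb) / 2` over `[ρb / 2, (1 + ρb) / 2]`,
and the best response puts the pool as close to `p_a` as that interval allows.
-/

open Set Real

noncomputable def logScore (p x : ℝ) : ℝ := p * log x + (1 - p) * log (1 - x)

lemma pay2_eq_logScore {p x : ℝ} (h0 : x = 0 → p = 0) (h1 : x = 1 → p = 1) :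
    pay2 p x = logScore p x := by
  rw [pay2, logScore, if_neg (fun h => h.2 (h0 h.1)), if_neg (fun h => h.2 (h1 h.1))]
  rfl

lemma pay2_symm (p x : ℝ) : pay2 p x = pay2 (1 - p) (1 - x) := by
  have e (a : ℝ) : 1 - a = 0 ↔ a = 1 := sub_eq_zero.trans eq_comm
  simp only [pay2, sub_sub_cancel, ne_eq, e, sub_eq_self]
  exact add_comm _ _

lemma hasDerivAt_logScore (p : ℝ) {x : ℝ} (hx0 : x ≠ 0) (hx1 : x ≠ 1) :
    HasDerivAt (logScore p) ((p - x) / (x * (1 - x))) x := by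
  have hx1' : 1 - x ≠ 0 := sub_ne_zero.mpr hx1.symm
  have h : HasDerivAt (fun y => p * log y + (1 - p) * log (1 - y))
      (p * x⁻¹ + (1 - p) * (-1 / (1 - x))) x :=
    ((hasDerivAt_log hx0).const_mul p).add
      (((hasDerivAt_id' x).const_sub 1).log hx1' |>.const_mul (1 - p))
  refine h.congr_deriv ?_
  field_simp
  ring

lemma continuousOn_logScore {p : ℝ} (hp : p ≤ 1) : ContinuousOn (logScore p) (Ioc 0 p) := by
  have hlog : ContinuousOn (fun x => p * log x) (Ioc 0 p) :=
    (continuousOn_log.mono fun x hx => hx.1.ne').const_smul p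
  rcases hp.lt_or_eq with hp | rfl
  · refine hlog.add ((continuousOn_const.sub continuousOn_id).log ?_ |>.const_smul (1 - p))
    exact fun x hx => sub_ne_zero.mpr (hx.2.trans_lt hp).ne'
  · show ContinuousOn (fun x => 1 * log x + (1 - 1) * log (1 - x)) _
    simpa using hlog

lemma logScore_monotoneOn {p : ℝ} (hp : p ≤ 1) : MonotoneOn (logScore p) (Ioc 0 p) := by
  refine monotoneOn_of_hasDerivWithinAt_nonneg (f' := fun x => (p - x) / (x * (1 - x))) (convex_Ioc 0 p) (continuousOn_logScore hp)
    (fun x hx => ?_) (fun x hx => ?_) <;> rw [interior_Ioc] at hx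
  · exact (hasDerivAt_logScore p hx.1.ne' (hx.2.trans_le hp).ne).hasDerivWithinAt
  · exact div_nonneg (sub_nonneg.mpr hx.2.le) (mul_nonneg hx.1.le (by linarith [hx.2]))

lemma pay2_monotoneOn {p : ℝ} (hp : p ≤ 1) : MonotoneOn (pay2 p) (Icc 0 p) := by
  intro x hx y hy hxy
  rcases hx.1.eq_or_lt with rfl | hx0
  · by_cases hp0 : p = 0
    · rw [le_antisymm (hy.2.trans hp0.le) hy.1]
    · simp [pay2, hp0]
  have h1 {z : ℝ} (hz : z ≤ p) : z = 1 → p = 1 := fun h => le_antisymm hp (h ▸ hz)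
  rw [pay2_eq_logScore (fun h => absurd h hx0.ne') (h1 hx.2),
    pay2_eq_logScore (fun h => absurd h (hx0.trans_le hxy).ne') (h1 hy.2)]
  exact_mod_cast logScore_monotoneOn hp ⟨hx0, hx.2⟩ ⟨hx0.trans_le hxy, hy.2⟩ hxy

lemma pay2_antitoneOn {p : ℝ} (hp : 0 ≤ p) : AntitoneOn (pay2 p) (Icc p 1) := by
  intro x hx y hy hxy
  rw [pay2_symm p x, pay2_symm p y]
  exact pay2_monotoneOn (by linarith) ⟨by linarith [hy.2], by linarith [hy.1]⟩
    ⟨by linarith [hx.2], by linarith [hx.1]⟩ (by linarith)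

/-- agent a's best response to report `ρb` in the two-agent,
two-state belief reporting game with log utility and the symmetric linear
opinion pool. -/
theorem stmt1 (pa ρb : ℝ) (hpa : pa ∈ Set.Icc (0:ℝ) 1) (hρb : ρb ∈ Set.Icc (0:ℝ) 1) :
    (ρb ≤ 2 * pa - 1 →
      IsMaxOn (fun ρa => pay2 pa ((ρa + ρb) / 2)) (Set.Icc (0:ℝ) 1) 1) ∧
    (2 * pa - 1 ≤ ρb → ρb ≤ 2 * pa →
      IsMaxOn (fun ρa => pay2 pa ((ρa + ρb) / 2)) (Set.Icc (0:ℝ) 1) (2 * pa - ρb)) ∧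
    (2 * pa ≤ ρb →
      IsMaxOn (fun ρa => pay2 pa ((ρa + ρb) / 2)) (Set.Icc (0:ℝ) 1) 0) := by
  obtain ⟨hp0, hp1⟩ := hpa
  obtain ⟨hb0, hb1⟩ := hρb
  refine ⟨fun h ρa hρa => ?_, fun h1 h2 ρa hρa => ?_, fun h ρa hρa => ?_⟩ <;>
    obtain ⟨ha0, ha1⟩ := hρa <;> simp only [mem_ofPred_eq]
  · exact pay2_monotoneOn hp1 ⟨by linarith, by linarith⟩ ⟨by linarith, by linarith⟩
      (by linarith)
  · rw [show (2 * pa - ρb + ρb) / 2 = pa by ring]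
    rcases le_total ((ρa + ρb) / 2) pa with hc | hc
    · exact pay2_monotoneOn hp1 ⟨by linarith, hc⟩ ⟨hp0, le_rfl⟩ hc
    · exact pay2_antitoneOn hp0 ⟨le_rfl, hp1⟩ ⟨hc, by linarith⟩ hc
  · exact pay2_antitoneOn hp0 ⟨by linarith, by linarith⟩ ⟨by linarith, by linarith⟩
      (by linarith)
end

section
/- In the two-agent, two-state log-utility belief reporting game with the symmetric linear opinion pool, with true beliefs p_a ≤ p_b, the aggregate belief at any pure Nash equilibrium equals the median of {p_a, p_b, 1/2}. -/
/-! For a true belief `p`, the payoff `pay2 p` is single-peaked in the aggregate: strictly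
increasing on `[0, p]` and strictly decreasing on `[p, 1]` (on the interior its derivative is
`(p - t) / (t (1 - t))`). So at a best response an agent whose belief lies above the aggregate
reports `1`, and one whose belief lies below it reports `0`. With `pa ≤ pb` this traps the
aggregate in `[pa, pb]`; it stays below `1/2` only if it is already at `pb` (else agent `b`
reports `1`, pushing it to at least `1/2`), and symmetrically above `1/2` only at `pa`. -/

open Set Real

lemma strictMonoOn_mul_log_add_mul_log_one_sub {p : ℝ} (hp : p ≤ 1) :
    StrictMonoOn (fun t => p * log t + (1 - p) * log (1 - t)) (Ioc 0 p) := by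
  rcases hp.lt_or_eq with hp | rfl
  · refine strictMonoOn_of_deriv_pos (convex_Ioc 0 p) ?_ fun t ht => ?_
    · refine ContinuousOn.add (continuousOn_const.mul (continuousOn_log.mono ?_))
        (continuousOn_const.mul ((continuousOn_log.comp (continuousOn_const.sub continuousOn_id)) ?_))
      · exact fun t ht => ht.1.ne'
      · exact fun t ht => sub_ne_zero.2 (ht.2.trans_lt hp).ne'
    rw [interior_Ioc] at ht
    obtain ⟨ht0, htp⟩ := ht
    have ht1 : 0 < 1 - t := by linarith
    have hderiv : HasDerivAt (fun t => p * log t + (1 - p) * log (1 - t))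
        (p * t⁻¹ + (1 - p) * ((1 - t)⁻¹ * -1)) t :=
      ((hasDerivAt_log ht0.ne').const_mul p).add
        (((hasDerivAt_log ht1.ne').comp t ((hasDerivAt_id t).const_sub 1)).const_mul (1 - p))
    rw [hderiv.deriv]
    have : p * t⁻¹ + (1 - p) * ((1 - t)⁻¹ * -1) = (p - t) / (t * (1 - t)) := by
      field_simp; ring
    rw [this]
    exact div_pos (by linarith) (mul_pos ht0 ht1)
  · simpa using strictMonoOn_log.mono Ioc_subset_Ioi_self

lemma pay2_of_mem_Ioc {p x : ℝ} (hp : p ≤ 1) (hx : x ∈ Ioc 0 p) :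
    pay2 p x = ((p * log x + (1 - p) * log (1 - x) : ℝ) : EReal) := by
  have h1 : ¬(x = 1 ∧ p ≠ 1) := fun ⟨hx1, hp1⟩ => hp1 (le_antisymm hp (hx1 ▸ hx.2))
  rw [pay2, if_neg fun h => hx.1.ne' h.1, if_neg h1, EReal.coe_add]

lemma pay2_zero {p : ℝ} (hp : p ≠ 0) : pay2 p 0 = ⊥ := by
  simp [pay2, hp]

lemma pay2_one_sub_one_sub (p x : ℝ) : pay2 (1 - p) (1 - x) = pay2 p x := by
  simp only [pay2, sub_sub_cancel, ne_eq, sub_eq_self, sub_eq_zero, eq_comm (a := (1 : ℝ))]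
  exact add_comm _ _

lemma pay2_strictMonoOn {p : ℝ} (hp : p ≤ 1) : StrictMonoOn (pay2 p) (Icc 0 p) := by
  intro x hx y hy hxy
  have hy' : y ∈ Ioc 0 p := ⟨hx.1.trans_lt hxy, hy.2⟩
  rw [pay2_of_mem_Ioc hp hy']
  rcases hx.1.eq_or_lt with rfl | hx0
  · rw [pay2_zero (hy'.1.trans_le hy'.2).ne']
    exact EReal.bot_lt_coe _
  · rw [pay2_of_mem_Ioc hp ⟨hx0, hx.2⟩, EReal.coe_lt_coe_iff]
    exact strictMonoOn_mul_log_add_mul_log_one_sub hp ⟨hx0, hx.2⟩ hy' hxy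

lemma pay2_strictAntiOn {p : ℝ} (hp : 0 ≤ p) : StrictAntiOn (pay2 p) (Icc p 1) := by
  intro x hx y hy hxy
  rw [← pay2_one_sub_one_sub p x, ← pay2_one_sub_one_sub p y]
  exact pay2_strictMonoOn (by linarith) ⟨by linarith [hy.2], by linarith [hy.1]⟩
    ⟨by linarith [hx.2], by linarith [hx.1]⟩ (by linarith)

section BestResponse

variable {β : Type*} [Preorder β] {f : ℝ → β} {p c ρ : ℝ}

lemma one_le_of_isMaxOn_of_lt (hf : StrictMonoOn f (Icc 0 p)) (hρ : 0 ≤ ρ) (hc : 0 ≤ c)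
    (hmax : IsMaxOn (fun r => f ((r + c) / 2)) (Icc 0 1) ρ) (hlt : (ρ + c) / 2 < p) :
    1 ≤ ρ := by
  by_contra! hρ1
  set x := min p ((1 + c) / 2)
  have hx : (ρ + c) / 2 < x := lt_min hlt (by linarith)
  have hxp : x ≤ p := min_le_left _ _
  have hx1 : x ≤ (1 + c) / 2 := min_le_right _ _
  have hle := isMaxOn_iff.1 hmax (2 * x - c) ⟨by linarith, by linarith⟩
  rw [show (2 * x - c + c) / 2 = x by ring] at hle
  exact (hf ⟨by linarith, hlt.le⟩ ⟨by linarith, hxp⟩ hx).not_ge hle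

lemma nonpos_of_isMaxOn_of_gt (hf : StrictAntiOn f (Icc p 1)) (hρ : ρ ≤ 1) (hc : c ≤ 1)
    (hmax : IsMaxOn (fun r => f ((r + c) / 2)) (Icc 0 1) ρ) (hgt : p < (ρ + c) / 2) :
    ρ ≤ 0 := by
  by_contra! hρ0
  set x := max p (c / 2)
  have hx : x < (ρ + c) / 2 := max_lt hgt (by linarith)
  have hpx : p ≤ x := le_max_left _ _
  have hx0 : c / 2 ≤ x := le_max_right _ _
  have hle := isMaxOn_iff.1 hmax (2 * x - c) ⟨by linarith, by linarith⟩
  rw [show (2 * x - c + c) / 2 = x by ring] at hle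
  exact (hf ⟨hpx, by linarith⟩ ⟨hgt.le, by linarith⟩ hx).not_ge hle

end BestResponse

/-- with true beliefs `pa ≤ pb`, the aggregate belief at any pure
Nash equilibrium of the two-agent, two-state log-utility reporting game equals
the median of `{pa, pb, 1/2}`, which (given `pa ≤ pb`) is `max pa (min pb (1/2))`. -/
theorem stmt2 (pa pb ρa ρb : ℝ)
    (hpa : pa ∈ Set.Icc (0:ℝ) 1) (hpb : pb ∈ Set.Icc (0:ℝ) 1) (hab : pa ≤ pb)
    (hρa : ρa ∈ Set.Icc (0:ℝ) 1) (hρb : ρb ∈ Set.Icc (0:ℝ) 1)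
    (hNa : IsMaxOn (fun r => pay2 pa ((r + ρb) / 2)) (Set.Icc (0:ℝ) 1) ρa)
    (hNb : IsMaxOn (fun r => pay2 pb ((ρa + r) / 2)) (Set.Icc (0:ℝ) 1) ρb) :
    (ρa + ρb) / 2 = max pa (min pb (1 / 2)) := by
  have hNb' : IsMaxOn (fun r => pay2 pb ((r + ρa) / 2)) (Icc 0 1) ρb := by
    simpa only [add_comm ρa] using hNb
  have ha₁ : (ρa + ρb) / 2 < pa → 1 ≤ ρa :=
    one_le_of_isMaxOn_of_lt (pay2_strictMonoOn hpa.2) hρa.1 hρb.1 hNa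
  have ha₀ : pa < (ρa + ρb) / 2 → ρa ≤ 0 :=
    nonpos_of_isMaxOn_of_gt (pay2_strictAntiOn hpa.1) hρa.2 hρb.2 hNa
  have hb₁ : (ρa + ρb) / 2 < pb → 1 ≤ ρb := fun h =>
    one_le_of_isMaxOn_of_lt (pay2_strictMonoOn hpb.2) hρb.1 hρa.1 hNb' (by linarith)
  have hb₀ : pb < (ρa + ρb) / 2 → ρb ≤ 0 := fun h =>
    nonpos_of_isMaxOn_of_gt (pay2_strictAntiOn hpb.1) hρb.2 hρa.2 hNb' (by linarith)
  have hpa_le : pa ≤ (ρa + ρb) / 2 := not_lt.1 fun h => by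
    linarith [ha₁ h, hb₁ (h.trans_le hab), hpa.2]
  have hle_pb : (ρa + ρb) / 2 ≤ pb := not_lt.1 fun h => by
    linarith [ha₀ (hab.trans_lt h), hb₀ h, hpb.1]
  have hmin_le : min pb (1 / 2) ≤ (ρa + ρb) / 2 := not_lt.1 fun h => by
    linarith [hb₁ (h.trans_le (min_le_left _ _)), min_le_right pb (1 / 2), hρa.1]
  have hle_max : (ρa + ρb) / 2 ≤ max pa (1 / 2) := not_lt.1 fun h => by
    linarith [ha₀ ((le_max_left _ _).trans_lt h), le_max_right pa (1 / 2), hρb.2]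
  refine le_antisymm ?_ (max_le hpa_le hmin_le)
  rw [max_min_distrib_left, max_eq_right hab]
  exact le_min hle_pb hle_max
end

section
/- A profile (ρ_1,…,ρ_n) of reports in Δ(S) is a Nash equilibrium of the log-utility preference revelation game under the symmetric linear opinion pool if and only if there exists a parimutuel equilibrium with equal wealth (ρ, x) of the parimutuel market with beliefs (p_1,…,p_n) such that ρ_{i,s} = ρ_s x_{i,s} / (Σ_{s'} ρ_{s'} x_{i,s'}) for all i; moreover the aggregate report (1/n)Σ_i ρ_i equals the equilibrium price ρ. -/
/-- Expected log utility with the convention `0 · ln 0 = 0`. -/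
noncomputable def payE {S : Type*} [Fintype S] (p x : S → ℝ) : EReal :=
  ∑ s, if x s = 0 ∧ p s ≠ 0 then (⊥ : EReal)
       else (((p s * Real.log (x s)) : ℝ) : EReal)

/-- Agent `i`'s payoff in the log-utility revelation game under the symmetric
linear opinion pool: `∑ s, p i s · log ((1/n) ∑ j, ρ j s)`. -/
noncomputable def gamePay {S : Type*} [Fintype S] {n : ℕ}
    (p : S → ℝ) (ρ : Fin n → S → ℝ) : EReal :=
  payE p (fun s => (∑ j, ρ j s) / n)

lemma ereal_coe_sum {S : Type*} [Fintype S] (f : S → ℝ) :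
    ((∑ s, f s : ℝ) : EReal) = ∑ s, ((f s : ℝ) : EReal) :=
  map_sum (⟨⟨Real.toEReal, EReal.coe_zero⟩, EReal.coe_add⟩ : ℝ →+ EReal) _ _

lemma payE_eq_coe {S : Type*} [Fintype S] {p x : S → ℝ} (hx : ∀ s, x s ≠ 0) :
    payE p x = ((∑ s, p s * Real.log (x s) : ℝ) : EReal) := by
  rw [payE, ereal_coe_sum]
  exact Finset.sum_congr rfl fun s _ => by simp [hx s]

lemma payE_eq_bot {S : Type*} [Fintype S] {p x : S → ℝ} (s0 : S)
    (h0 : x s0 = 0) (hps : p s0 ≠ 0) : payE p x = ⊥ := by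
  classical
  rw [payE, ← Finset.add_sum_erase _ _ (Finset.mem_univ s0), if_pos ⟨h0, hps⟩,
    EReal.bot_add]

lemma log_sub_log_le {a b : ℝ} (ha : 0 < a) (hb : 0 < b) :
    Real.log b - Real.log a ≤ (b - a) / a := by
  rw [← Real.log_div hb.ne' ha.ne']
  have h := Real.log_le_sub_one_of_pos (div_pos hb ha)
  have : b / a - 1 = (b - a) / a := by field_simp
  linarith

lemma sum_update_pt {S : Type*} [Fintype S] {n : ℕ} (ρ : Fin n → S → ℝ)
    (i : Fin n) (r : S → ℝ) (s : S) :
    ∑ j, Function.update ρ i r j s = (∑ j, ρ j s) + (r s - ρ i s) := by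
  classical
  have : ∀ j, Function.update ρ i r j s = ρ j s + (if j = i then r s - ρ i s else 0) := by
    intro j
    rcases eq_or_ne j i with h | h <;> simp [h, Function.update_apply]
  simp_rw [this, Finset.sum_add_distrib, Finset.sum_ite_eq' Finset.univ i
    (fun _ => r s - ρ i s), Finset.mem_univ, if_pos]

set_option maxHeartbeats 1000000 in
lemma stmt8_fwd {S : Type*} [Fintype S] [Nonempty S] {n : ℕ} (hn : 0 < n)
    (p ρ : Fin n → S → ℝ)
    (hp : ∀ i, p i ∈ stdSimplex ℝ S) (hfs : ∀ i s, 0 < p i s)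
    (hρ : ∀ i, ρ i ∈ stdSimplex ℝ S) :
    (∀ i : Fin n, ∀ r ∈ stdSimplex ℝ S,
        gamePay (p i) (Function.update ρ i r) ≤ gamePay (p i) ρ) →
    (∃ (q : S → ℝ) (x : Fin n → S → ℝ),
      q ∈ stdSimplex ℝ S ∧
      (∀ i s, 0 ≤ x i s) ∧
      (∀ s, ∑ i, x i s = 1) ∧
      (∀ i, ∀ y : S → ℝ, (∀ s, 0 ≤ y s) → ∑ s, q s * y s ≤ 1 / n →
        ∑ s, p i s * y s ≤ ∑ s, p i s * x i s) ∧
      (∀ i s, ρ i s = q s * x i s / ∑ s', q s' * x i s') ∧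
      (∀ s, (∑ i, ρ i s) / n = q s)) := by
  classical
  have hnR : (0:ℝ) < n := Nat.cast_pos.mpr hn
  intro hNash
  set Q : S → ℝ := fun s => ∑ j, ρ j s with hQdef
  have hQnn : ∀ s, 0 ≤ Q s := fun s => Finset.sum_nonneg fun j _ => (hρ j).1 s
  have hρleQ : ∀ (i : Fin n) s, ρ i s ≤ Q s := fun i s =>
    Finset.single_le_sum (fun j _ => (hρ j).1 s) (Finset.mem_univ i)
  -- positivity of the pooled report
  have hQpos : ∀ s, 0 < Q s := by
    intro s0
    by_contra h
    have hQ0 : Q s0 = 0 := le_antisymm (not_lt.mp h) (hQnn s0)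
    set i0 : Fin n := ⟨0, hn⟩
    have hcard : (0:ℝ) < (Fintype.card S : ℝ) := by
      exact_mod_cast Fintype.card_pos
    have hrmem : (fun _ : S => (Fintype.card S : ℝ)⁻¹) ∈ stdSimplex ℝ S := by
      constructor
      · intro s; positivity
      · rw [Finset.sum_const, nsmul_eq_mul, Finset.card_univ]
        exact mul_inv_cancel₀ hcard.ne'
    have hle := hNash i0 _ hrmem
    have hbot : gamePay (p i0) ρ = ⊥ := by
      simp only [gamePay]
      refine payE_eq_bot s0 ?_ (hfs i0 s0).ne'
      show (∑ j, ρ j s0) / (n:ℝ) = 0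
      have : (∑ j, ρ j s0) = Q s0 := rfl
      rw [this, hQ0, zero_div]
    have hcoe : gamePay (p i0) (Function.update ρ i0 (fun _ => (Fintype.card S : ℝ)⁻¹)) =
        ((∑ s, p i0 s * Real.log
          ((∑ j, Function.update ρ i0 (fun _ => (Fintype.card S : ℝ)⁻¹) j s) / n) : ℝ) : EReal) := by
      simp only [gamePay]
      refine payE_eq_coe fun s => ?_
      rw [sum_update_pt]
      have h1 := hρleQ i0 s
      have h2 : (0:ℝ) < (Fintype.card S : ℝ)⁻¹ := by positivity
      have h3 : 0 < (∑ j, ρ j s) + ((fun _ : S => (Fintype.card S : ℝ)⁻¹) s - ρ i0 s) := by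
        have hQs : (∑ j, ρ j s) = Q s := rfl
        simp only [hQs]
        linarith
      positivity
    rw [hbot, hcoe] at hle
    exact LT.lt.not_ge (EReal.bot_lt_coe _) hle
  -- key first-order condition from Nash
  have hkey : ∀ (i : Fin n) s t, 0 < ρ i t → p i s * Q t ≤ p i t * Q s := by
    intro i s t hρit
    rcases eq_or_ne s t with rfl | hst
    · exact le_rfl
    by_contra hlt
    push_neg at hlt
    have hps := hfs i s
    have hpt := hfs i t
    obtain ⟨d, hd, hd0⟩ : ∃ d : ℝ, d = p i s * Q t - p i t * Q s ∧ 0 < d :=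
      ⟨_, rfl, by linarith⟩
    obtain ⟨ε, hεpos, hε1, hε2, hε3⟩ : ∃ ε : ℝ, 0 < ε ∧ ε ≤ ρ i t ∧ ε ≤ Q t / 2 ∧
        ε ≤ d / (2 * (p i s + p i t)) :=
      ⟨min (ρ i t) (min (Q t / 2) (d / (2 * (p i s + p i t)))),
        lt_min hρit (lt_min (by linarith [hQpos t]) (div_pos hd0 (by positivity))),
        min_le_left _ _, le_trans (min_le_right _ _) (min_le_left _ _),
        le_trans (min_le_right _ _) (min_le_right _ _)⟩
    obtain ⟨ind, hinds, hindt, hindo, hindsum⟩ :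
        ∃ ind : S → ℝ, ind s = ε ∧ ind t = -ε ∧ (∀ u, u ≠ s → u ≠ t → ind u = 0) ∧
          ∑ u, ind u = 0 := by
      refine ⟨fun u => (if u = s then ε else 0) - (if u = t then ε else 0),
        by simp [hst], by simp [Ne.symm hst], fun u h1 h2 => by simp [h1, h2], ?_⟩
      simp [Finset.sum_sub_distrib, Finset.sum_ite_eq']
    have hrmem : (fun u => ρ i u + ind u) ∈ stdSimplex ℝ S := by
      constructor
      · intro u
        rcases eq_or_ne u s with rfl | hus
        · have := (hρ i).1 u
          simp only [hinds]; linarith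
        rcases eq_or_ne u t with rfl | hut
        · simp only [hindt]; linarith
        · have := (hρ i).1 u
          simp only [hindo u hus hut]; linarith
      · rw [Finset.sum_add_distrib, (hρ i).2, hindsum, add_zero]
    have hposu : ∀ u, 0 < Q u + ind u := by
      intro u
      rcases eq_or_ne u s with rfl | hus
      · rw [hinds]; linarith [hQpos u]
      rcases eq_or_ne u t with rfl | hut
      · rw [hindt]; linarith [hQpos u]
      · rw [hindo u hus hut, add_zero]; exact hQpos u
    have hle := hNash i _ hrmem
    have hcoe1 : gamePay (p i) (Function.update ρ i (fun u => ρ i u + ind u)) =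
        ((∑ u, p i u * Real.log ((Q u + ind u) / n) : ℝ) : EReal) := by
      simp only [gamePay]
      have heq : ∀ u, (∑ j, Function.update ρ i (fun u => ρ i u + ind u) j u)
          = Q u + ind u := by
        intro u; rw [sum_update_pt]
        have : (∑ j, ρ j u) = Q u := rfl
        rw [this]; ring
      rw [payE_eq_coe (fun u => by rw [heq u]; have := hposu u; positivity)]
      congr 1
      exact Finset.sum_congr rfl fun u _ => by rw [heq u]
    have hcoe2 : gamePay (p i) ρ = ((∑ u, p i u * Real.log (Q u / n) : ℝ) : EReal) := by
      simp only [gamePay]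
      refine payE_eq_coe fun u => ?_
      have h := (hQpos u).ne'
      exact div_ne_zero h hnR.ne'
    rw [hcoe1, hcoe2, EReal.coe_le_coe_iff] at hle
    have hsplit : ∀ (X : ℝ), 0 < X →
        Real.log (X / n) = Real.log X - Real.log n := fun X hX =>
      Real.log_div hX.ne' hnR.ne'
    have hle' : ∑ u, p i u * Real.log (Q u + ind u) ≤ ∑ u, p i u * Real.log (Q u) := by
      have e1 : ∀ u ∈ Finset.univ, p i u * Real.log ((Q u + ind u) / n)
          = p i u * Real.log (Q u + ind u) - p i u * Real.log n := by
        intro u _; rw [hsplit _ (hposu u)]; ring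
      have e2 : ∀ u ∈ Finset.univ, p i u * Real.log (Q u / n)
          = p i u * Real.log (Q u) - p i u * Real.log n := by
        intro u _; rw [hsplit _ (hQpos u)]; ring
      rw [Finset.sum_congr rfl e1, Finset.sum_congr rfl e2,
        Finset.sum_sub_distrib, Finset.sum_sub_distrib] at hle
      linarith
    have hgsum : ∑ u, p i u * (Real.log (Q u + ind u) - Real.log (Q u)) ≤ 0 := by
      simp_rw [mul_sub]
      rw [Finset.sum_sub_distrib]
      linarith
    have hgpair : ∑ u, p i u * (Real.log (Q u + ind u) - Real.log (Q u))
        = p i s * (Real.log (Q s + ε) - Real.log (Q s))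
          + p i t * (Real.log (Q t - ε) - Real.log (Q t)) := by
      have h1 : ∑ u ∈ ({s, t} : Finset S),
          p i u * (Real.log (Q u + ind u) - Real.log (Q u))
          = ∑ u, p i u * (Real.log (Q u + ind u) - Real.log (Q u)) := by
        refine Finset.sum_subset (Finset.subset_univ _) ?_
        intro u _ hu
        simp only [Finset.mem_insert, Finset.mem_singleton, not_or] at hu
        rw [hindo u hu.1 hu.2, add_zero, sub_self, mul_zero]
      rw [← h1, Finset.sum_pair hst, hinds, hindt]
      ring_nf
    have hQsε : 0 < Q s + ε := by linarith [hQpos s]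
    have hQtε : 0 < Q t - ε := by linarith [hQpos t]
    have hgs : p i s * (ε / (Q s + ε)) ≤
        p i s * (Real.log (Q s + ε) - Real.log (Q s)) := by
      have h := log_sub_log_le hQsε (hQpos s)
      have hvs : Q s - (Q s + ε) = -ε := by ring
      rw [hvs, neg_div] at h
      have hls : ε / (Q s + ε) ≤ Real.log (Q s + ε) - Real.log (Q s) := by linarith
      exact mul_le_mul_of_nonneg_left hls hps.le
    have hgt : -(p i t * (Real.log (Q t - ε) - Real.log (Q t)))
        ≤ p i t * (ε / (Q t - ε)) := by
      have h := log_sub_log_le hQtε (hQpos t)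
      have hvt : Q t - (Q t - ε) = ε := by ring
      rw [hvt] at h
      nlinarith
    have hchain : p i s * (ε / (Q s + ε)) ≤ p i t * (ε / (Q t - ε)) := by
      rw [hgpair] at hgsum; linarith
    have hcross : p i s * ε * (Q t - ε) ≤ p i t * ε * (Q s + ε) := by
      rw [mul_div_assoc', mul_div_assoc'] at hchain
      exact (div_le_div_iff₀ hQsε hQtε).mp hchain
    have hεd : ε * (p i s + p i t) ≤ d / 2 := by
      have hm := mul_le_mul_of_nonneg_right hε3 (by positivity : (0:ℝ) ≤ p i s + p i t)
      have heq2 : d / (2 * (p i s + p i t)) * (p i s + p i t) = d / 2 := by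
        have hne : p i s + p i t ≠ 0 := by positivity
        field_simp
      rw [heq2] at hm
      exact hm
    have hfac : d / 2 ≤ p i s * (Q t - ε) - p i t * (Q s + ε) := by
      have heq : p i s * (Q t - ε) - p i t * (Q s + ε) = d - ε * (p i s + p i t) := by
        rw [hd]; ring
      rw [heq]; linarith
    have hposf : 0 < ε * (d / 2) := mul_pos hεpos (by linarith)
    have hstep : ε * (d / 2) ≤ ε * (p i s * (Q t - ε) - p i t * (Q s + ε)) :=
      mul_le_mul_of_nonneg_left hfac hεpos.le
    nlinarith [hcross, hposf, hstep]
  -- build the equilibrium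
  refine ⟨fun s => Q s / n, fun i s => ρ i s / Q s, ⟨?_, ?_⟩, ?_, ?_, ?_, ?_, ?_⟩
  · intro s; have := hQpos s; positivity
  · rw [← Finset.sum_div]
    have hsQ : ∑ s, Q s = n := by
      calc ∑ s, Q s = ∑ s, ∑ j, ρ j s := rfl
        _ = ∑ j, ∑ s, ρ j s := Finset.sum_comm
        _ = ∑ _j : Fin n, (1:ℝ) := Finset.sum_congr rfl fun j _ => (hρ j).2
        _ = n := by simp
    rw [hsQ, div_self hnR.ne']
  · intro i s; exact div_nonneg ((hρ i).1 s) (hQnn s)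
  · intro s
    rw [← Finset.sum_div]
    exact div_self (hQpos s).ne'
  · -- optimality
    intro i y hy hby
    obtain ⟨t, ht⟩ : ∃ t, 0 < ρ i t := by
      by_contra h
      push_neg at h
      have h0 : ∑ s, ρ i s = 0 :=
        Finset.sum_eq_zero fun s _ => le_antisymm (h s) ((hρ i).1 s)
      rw [(hρ i).2] at h0
      norm_num at h0
    have hVx : ∑ s, p i s * (ρ i s / Q s) = p i t / Q t := by
      have key : ∀ s ∈ Finset.univ, p i s * (ρ i s / Q s) = (p i t / Q t) * ρ i s := by
        intro s _
        rcases eq_or_lt_of_le ((hρ i).1 s) with h0 | hpos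
        · rw [← h0]; simp
        · have heq : p i s * Q t = p i t * Q s :=
            le_antisymm (hkey i s t ht) (hkey i t s hpos)
          have hq : p i s / Q s = p i t / Q t := by
            rw [div_eq_div_iff (hQpos s).ne' (hQpos t).ne']
            linarith
          calc p i s * (ρ i s / Q s) = (p i s / Q s) * ρ i s := by ring
            _ = (p i t / Q t) * ρ i s := by rw [hq]
      rw [Finset.sum_congr rfl key, ← Finset.mul_sum, (hρ i).2, mul_one]
    rw [hVx]
    have h1 : ∑ s, p i s * y s ≤ ∑ s, (p i t / Q t) * (Q s * y s) := by
      refine Finset.sum_le_sum fun s _ => ?_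
      have hVs : p i s ≤ (p i t / Q t) * Q s := by
        rw [div_mul_eq_mul_div, le_div_iff₀ (hQpos t)]
        exact hkey i s t ht
      calc p i s * y s ≤ ((p i t / Q t) * Q s) * y s :=
            mul_le_mul_of_nonneg_right hVs (hy s)
        _ = (p i t / Q t) * (Q s * y s) := by ring
    have h2 : ∑ s, Q s * y s ≤ 1 := by
      have hb : ∑ s, Q s / n * y s ≤ 1 / n := hby
      have he : ∀ s ∈ Finset.univ, Q s / (n:ℝ) * y s = (Q s * y s) / n :=
        fun s _ => by ring
      rw [Finset.sum_congr rfl he, ← Finset.sum_div, div_le_div_iff₀ hnR hnR] at hb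
      nlinarith
    rw [← Finset.mul_sum] at h1
    have hVpos : 0 ≤ p i t / Q t := le_of_lt (div_pos (hfs i t) (hQpos t))
    nlinarith
  · -- share formula
    intro i s
    have he : ∀ s' ∈ Finset.univ, Q s' / (n:ℝ) * (ρ i s' / Q s') = ρ i s' / n := by
      intro s' _
      have h1 := (hQpos s').ne'
      field_simp
    rw [Finset.sum_congr rfl he, ← Finset.sum_div, (hρ i).2, he s (Finset.mem_univ s)]
    have hns : (n:ℝ) ≠ 0 := hnR.ne'
    field_simp
  · intro s; rfl

set_option maxHeartbeats 1000000 in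
lemma stmt8_bwd {S : Type*} [Fintype S] [Nonempty S] {n : ℕ} (hn : 0 < n)
    (p ρ : Fin n → S → ℝ)
    (hp : ∀ i, p i ∈ stdSimplex ℝ S) (hfs : ∀ i s, 0 < p i s)
    (hρ : ∀ i, ρ i ∈ stdSimplex ℝ S) :
    (∃ (q : S → ℝ) (x : Fin n → S → ℝ),
      q ∈ stdSimplex ℝ S ∧
      (∀ i s, 0 ≤ x i s) ∧
      (∀ s, ∑ i, x i s = 1) ∧
      (∀ i, ∀ y : S → ℝ, (∀ s, 0 ≤ y s) → ∑ s, q s * y s ≤ 1 / n →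
        ∑ s, p i s * y s ≤ ∑ s, p i s * x i s) ∧
      (∀ i s, ρ i s = q s * x i s / ∑ s', q s' * x i s') ∧
      (∀ s, (∑ i, ρ i s) / n = q s)) →
    (∀ i : Fin n, ∀ r ∈ stdSimplex ℝ S,
        gamePay (p i) (Function.update ρ i r) ≤ gamePay (p i) ρ) := by
  classical
  have hnR : (0:ℝ) < n := Nat.cast_pos.mpr hn
  rintro ⟨q, x, hq, hx0, hxsum, hopt, hrx, hagg⟩ i r hr
  -- positivity of prices
  have hqpos : ∀ s, 0 < q s := by
    intro s0
    rcases lt_or_ge 0 (q s0) with h | h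
    · exact h
    exfalso
    have hq0 : q s0 = 0 := le_antisymm h (hq.1 s0)
    have hVnn : 0 ≤ ∑ s, p i s * x i s :=
      Finset.sum_nonneg fun s _ => mul_nonneg (hfs i s).le (hx0 i s)
    set M : ℝ := ((∑ s, p i s * x i s) + 1) / p i s0 with hM
    have hMpos : 0 < M := div_pos (by linarith) (hfs i s0)
    have hynn : ∀ u, 0 ≤ (fun u => if u = s0 then M else 0) u := by
      intro u; dsimp only
      split
      · exact hMpos.le
      · exact le_refl 0
    have hbud : ∑ s, q s * (fun u => if u = s0 then M else 0) s ≤ 1 / (n:ℝ) := by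
      simp only [mul_ite, mul_zero, Finset.sum_ite_eq', Finset.mem_univ, if_pos, hq0,
        zero_mul]
      positivity
    have h1 := hopt i _ hynn hbud
    have h2 : ∑ s, p i s * (fun u => if u = s0 then M else 0) s = p i s0 * M := by
      simp [mul_ite, Finset.sum_ite_eq']
    rw [h2, hM, mul_div_cancel₀ _ (hfs i s0).ne'] at h1
    linarith
  -- budgets bind
  have hBge : ∀ j : Fin n, 1 / (n:ℝ) ≤ ∑ s', q s' * x j s' := by
    intro j
    by_contra h
    push_neg at h
    obtain ⟨s0⟩ := ‹Nonempty S›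
    set ε : ℝ := (1 / n - ∑ s', q s' * x j s') / q s0 with hεd
    have hεpos : 0 < ε := div_pos (by linarith) (hqpos s0)
    have hynn : ∀ u, 0 ≤ (fun u => x j u + if u = s0 then ε else 0) u := by
      intro u; dsimp only
      split
      · exact add_nonneg (hx0 j u) hεpos.le
      · rw [add_zero]; exact hx0 j u
    have hbud : ∑ s, q s * (fun u => x j u + if u = s0 then ε else 0) s ≤ 1 / (n:ℝ) := by
      simp only [mul_add, Finset.sum_add_distrib, mul_ite, mul_zero,
        Finset.sum_ite_eq', Finset.mem_univ, if_pos]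
      rw [hεd, mul_div_cancel₀ _ (hqpos s0).ne']
      linarith
    have h1 := hopt j _ hynn hbud
    have h2 : ∑ s, p j s * (fun u => x j u + if u = s0 then ε else 0) s
        = (∑ s, p j s * x j s) + p j s0 * ε := by
      simp [mul_add, Finset.sum_add_distrib, mul_ite, Finset.sum_ite_eq']
    rw [h2] at h1
    nlinarith [hfs j s0]
  have hBsum : ∑ j, ∑ s', q s' * x j s' = 1 := by
    rw [Finset.sum_comm]
    have he : ∀ s ∈ Finset.univ, ∑ j, q s * x j s = q s := by
      intro s _; rw [← Finset.mul_sum, hxsum s, mul_one]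
    rw [Finset.sum_congr rfl he]
    exact hq.2
  have hBeq : ∀ j : Fin n, ∑ s', q s' * x j s' = 1 / n := by
    intro j
    by_contra h
    have hlt : 1 / (n:ℝ) < ∑ s', q s' * x j s' := lt_of_le_of_ne (hBge j) (Ne.symm h)
    have hgt : (1:ℝ) < ∑ j, ∑ s', q s' * x j s' := by
      calc (1:ℝ) = ∑ _j : Fin n, (1 / n : ℝ) := by
            rw [Finset.sum_const, Finset.card_univ, Fintype.card_fin, nsmul_eq_mul]
            field_simp
        _ < ∑ j, ∑ s', q s' * x j s' :=
            Finset.sum_lt_sum (fun k _ => hBge k) ⟨j, Finset.mem_univ j, hlt⟩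
    rw [hBsum] at hgt
    exact lt_irrefl _ hgt
  -- report formula
  have hρx : ∀ (j : Fin n) s, ρ j s = n * (q s * x j s) := by
    intro j s
    rw [hrx j s, hBeq j]
    have hns : (n:ℝ) ≠ 0 := hnR.ne'
    field_simp
  have hVle : ∀ s, p i s / ((n:ℝ) * q s) ≤ ∑ s', p i s' * x i s' := by
    intro s
    have hq1 : (0:ℝ) < (n:ℝ) * q s := mul_pos hnR (hqpos s)
    have hynn : ∀ u, 0 ≤ (fun u => if u = s then 1 / ((n:ℝ) * q s) else 0) u := by
      intro u; dsimp only
      split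
      · positivity
      · exact le_refl 0
    have hbud : ∑ s', q s' * (fun u => if u = s then 1 / ((n:ℝ) * q s) else 0) s'
        ≤ 1 / (n:ℝ) := by
      simp only [mul_ite, mul_zero, Finset.sum_ite_eq', Finset.mem_univ, if_pos]
      rw [mul_one_div]
      rw [div_le_div_iff₀ hq1 hnR]
      have : q s * (n:ℝ) = 1 * ((n:ℝ) * q s) := by ring
      exact le_of_eq this
    have h1 := hopt i _ hynn hbud
    have h2 : ∑ s', p i s' * (fun u => if u = s then 1 / ((n:ℝ) * q s) else 0) s'
        = p i s / ((n:ℝ) * q s) := by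
      simp [mul_ite, Finset.sum_ite_eq', mul_one_div]
      ring
    rw [h2] at h1
    exact h1
  -- the pooled deviation report
  have hsum_nqs : ∀ s, (∑ j, ρ j s) = (n:ℝ) * q s := by
    intro s
    rw [← hagg s]
    field_simp
  have hWnn : ∀ s, 0 ≤ (n:ℝ) * q s + (r s - ρ i s) := by
    intro s
    have h1 : ρ i s ≤ (n:ℝ) * q s := by
      rw [← hsum_nqs s]
      exact Finset.single_le_sum (fun j _ => (hρ j).1 s) (Finset.mem_univ i)
    have h2 := hr.1 s
    linarith
  have hWe : ∀ s, (∑ j, Function.update ρ i r j s) = (n:ℝ) * q s + (r s - ρ i s) := by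
    intro s
    rw [sum_update_pt, hsum_nqs s]
  have hg2 : gamePay (p i) ρ = ((∑ s, p i s * Real.log (q s) : ℝ) : EReal) := by
    simp only [gamePay]
    rw [payE_eq_coe (fun s => by rw [hagg s]; exact (hqpos s).ne')]
    congr 1
    exact Finset.sum_congr rfl fun s _ => by rw [hagg s]
  by_cases hex : ∃ s0, (n:ℝ) * q s0 + (r s0 - ρ i s0) = 0
  · obtain ⟨s0, h0⟩ := hex
    have hbot' : gamePay (p i) (Function.update ρ i r) = ⊥ := by
      simp only [gamePay]
      refine payE_eq_bot s0 ?_ (hfs i s0).ne'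
      show (∑ j, Function.update ρ i r j s0) / (n:ℝ) = 0
      rw [hWe s0, h0, zero_div]
    rw [hbot']
    exact bot_le
  · push_neg at hex
    have hWpos : ∀ s, 0 < (n:ℝ) * q s + (r s - ρ i s) :=
      fun s => lt_of_le_of_ne (hWnn s) (Ne.symm (hex s))
    have hg1 : gamePay (p i) (Function.update ρ i r) =
        ((∑ s, p i s * Real.log (((n:ℝ) * q s + (r s - ρ i s)) / n) : ℝ) : EReal) := by
      simp only [gamePay]
      rw [payE_eq_coe (fun s => by rw [hWe s]; exact div_ne_zero (hex s) hnR.ne')]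
      congr 1
      exact Finset.sum_congr rfl fun s _ => by rw [hWe s]
    rw [hg1, hg2, EReal.coe_le_coe_iff]
    have key : ∀ s ∈ Finset.univ,
        p i s * Real.log (((n:ℝ) * q s + (r s - ρ i s)) / n) - p i s * Real.log (q s)
        ≤ (p i s / ((n:ℝ) * q s)) * r s - p i s * x i s := by
      intro s _
      have hWs := hWpos s
      have hqs := hqpos s
      have hlog := log_sub_log_le hqs
        (show (0:ℝ) < ((n:ℝ) * q s + (r s - ρ i s)) / n from div_pos hWs hnR)
      have harith : (((n:ℝ) * q s + (r s - ρ i s)) / n - q s) / q s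
          = (r s - ρ i s) / ((n:ℝ) * q s) := by
        have hns : (n:ℝ) ≠ 0 := hnR.ne'
        have hqs' : q s ≠ 0 := hqs.ne'
        field_simp
        ring
      rw [harith] at hlog
      have h3 := mul_le_mul_of_nonneg_left hlog (hfs i s).le
      have h5 : p i s * (ρ i s / ((n:ℝ) * q s)) = p i s * x i s := by
        rw [hρx i s]
        have hns : (n:ℝ) ≠ 0 := hnR.ne'
        have hqs' : q s ≠ 0 := hqs.ne'
        field_simp
      have h4 : p i s * ((r s - ρ i s) / ((n:ℝ) * q s))
          = (p i s / ((n:ℝ) * q s)) * r s - p i s * (ρ i s / ((n:ℝ) * q s)) := by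
        ring
      rw [h4, h5] at h3
      linarith [h3]
    have hsum := Finset.sum_le_sum key
    rw [Finset.sum_sub_distrib, Finset.sum_sub_distrib] at hsum
    have hterm : ∑ s, (p i s / ((n:ℝ) * q s)) * r s
        ≤ ∑ s, (∑ s', p i s' * x i s') * r s :=
      Finset.sum_le_sum fun s _ => mul_le_mul_of_nonneg_right (hVle s) (hr.1 s)
    rw [← Finset.mul_sum, hr.2, mul_one] at hterm
    linarith

/-- `(ρ 1, …, ρ n)` is a Nash equilibrium of the log-utility
revelation game under the symmetric linear opinion pool iff there is an
equal-wealth parimutuel equilibrium `(q, x)` of the parimutuel market with the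
true beliefs such that each report equals the agent's state-contingent share of
the betting pool; moreover the aggregate report equals the equilibrium price. -/
theorem stmt8 {S : Type*} [Fintype S] [Nonempty S] {n : ℕ} (hn : 0 < n)
    (p ρ : Fin n → S → ℝ)
    (hp : ∀ i, p i ∈ stdSimplex ℝ S) (hfs : ∀ i s, 0 < p i s)
    (hρ : ∀ i, ρ i ∈ stdSimplex ℝ S) :
    (∀ i : Fin n, ∀ r ∈ stdSimplex ℝ S,
        gamePay (p i) (Function.update ρ i r) ≤ gamePay (p i) ρ) ↔
    (∃ (q : S → ℝ) (x : Fin n → S → ℝ),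
      q ∈ stdSimplex ℝ S ∧
      (∀ i s, 0 ≤ x i s) ∧
      (∀ s, ∑ i, x i s = 1) ∧
      (∀ i, ∀ y : S → ℝ, (∀ s, 0 ≤ y s) → ∑ s, q s * y s ≤ 1 / n →
        ∑ s, p i s * y s ≤ ∑ s, p i s * x i s) ∧
      (∀ i s, ρ i s = q s * x i s / ∑ s', q s' * x i s') ∧
      (∀ s, (∑ i, ρ i s) / n = q s)) := by
  exact ⟨stmt8_fwd hn p ρ hp hfs hρ, stmt8_bwd hn p ρ hp hfs hρ⟩
end

section
/- If (ρ, x) is a parimutuel equilibrium with equal wealth for risk-neutral agents with beliefs p_1,…,p_n, then each agent's expenditure satisfies Σ_s ρ_s x_{i,s} = 1/n, and setting ρ_{i,s} = n·ρ_s·x_{i,s} defines a probability distribution ρ_i ∈ Δ(S) for each agent with (1/n)Σ_i ρ_i = ρ. -/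
/-!
An optimal demand exhausts the budget: if an agent spent less than its wealth `w`, adding the
leftover `t` to every coordinate would cost exactly `t` (prices sum to one) and raise expected
payoff by `t` (beliefs sum to one). So every agent spends at least `1/n`. Market clearing makes
total spending `∑ s, q s = 1`, hence every agent spends exactly `1/n`, and rescaling by `n` turns
each agent's spending into a probability distribution averaging back to `q`.
-/

open Finset

section

variable {S : Type*} [Fintype S]

def IsOptimalDemand (q p : S → ℝ) (w : ℝ) (x : S → ℝ) : Prop :=
  ∀ y : S → ℝ, (∀ s, 0 ≤ y s) → ∑ s, q s * y s ≤ w → ∑ s, p s * y s ≤ ∑ s, p s * x s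

theorem IsOptimalDemand.le_expenditure {q p x : S → ℝ} {w : ℝ} (hx : IsOptimalDemand q p w x)
    (hq : ∑ s, q s = 1) (hp : 0 < ∑ s, p s) (hx0 : ∀ s, 0 ≤ x s) :
    w ≤ ∑ s, q s * x s := by
  by_contra! hlt
  set t := w - ∑ s, q s * x s
  have ht : 0 < t := sub_pos.2 hlt
  have hsum (f : S → ℝ) : ∑ s, f s * (x s + t) = ∑ s, f s * x s + t * ∑ s, f s := by
    simp only [mul_add, sum_add_distrib, ← sum_mul, mul_comm t]
  have hgain := hx (fun s => x s + t) (fun s => by linarith [hx0 s]) (by rw [hsum, hq]; linarith)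
  rw [hsum] at hgain
  nlinarith

theorem sum_expenditure_eq_one {ι : Type*} [Fintype ι] {q : S → ℝ} (hq : ∑ s, q s = 1)
    {x : ι → S → ℝ} (hclear : ∀ s, ∑ i, x i s = 1) :
    ∑ i, ∑ s, q s * x i s = 1 := by
  simp_rw [sum_comm (γ := ι), ← mul_sum, hclear, mul_one, hq]

end

theorem stmt9_general {S : Type*} [Fintype S] {n : ℕ} (hn : 0 < n)
    (p : Fin n → S → ℝ) (hp : ∀ i, p i ∈ stdSimplex ℝ S)
    (q : S → ℝ) (hq : q ∈ stdSimplex ℝ S)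
    (x : Fin n → S → ℝ) (hx : ∀ i s, 0 ≤ x i s)
    (hclear : ∀ s, ∑ i, x i s = 1)
    (hopt : ∀ i, ∀ y : S → ℝ, (∀ s, 0 ≤ y s) → ∑ s, q s * y s ≤ 1 / n →
      ∑ s, p i s * y s ≤ ∑ s, p i s * x i s) :
    (∀ i, ∑ s, q s * x i s = 1 / n) ∧
    (∀ i, (fun s => n * (q s * x i s)) ∈ stdSimplex ℝ S) ∧
    (∀ s, (∑ i, n * (q s * x i s)) / n = q s) := by
  have hn' : (n : ℝ) ≠ 0 := by positivity
  have hge (i : Fin n) : 1 / (n : ℝ) ≤ ∑ s, q s * x i s :=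
    IsOptimalDemand.le_expenditure (hopt i) hq.2 ((hp i).2 ▸ one_pos) (hx i)
  have hspend : ∀ i, ∑ s, q s * x i s = 1 / n := by
    have htotal : ∑ _i : Fin n, 1 / (n : ℝ) = ∑ i, ∑ s, q s * x i s := by
      rw [sum_expenditure_eq_one hq.2 hclear, sum_const, card_univ, Fintype.card_fin,
        nsmul_eq_mul, mul_one_div_cancel hn']
    intro i
    exact ((sum_eq_sum_iff_of_le fun i _ => hge i).1 htotal i (mem_univ i)).symm
  refine ⟨hspend, fun i => ⟨fun s =>
    mul_nonneg n.cast_nonneg (mul_nonneg (hq.1 s) (hx i s)), ?_⟩,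
    fun s => ?_⟩
  · rw [← mul_sum, hspend i, mul_one_div_cancel hn']
  · rw [← mul_sum, ← mul_sum, hclear s, mul_one, mul_div_cancel_left₀ _ hn']

/-- in an equal-wealth parimutuel equilibrium `(q, x)` with
full-support risk-neutral beliefs, each agent spends exactly `1/n`, the
state-contingent pool shares `ρ i s = n · q s · x i s` form a probability
distribution for each agent, and these reports average back to the price. -/
theorem stmt9 {S : Type*} [Fintype S] [Nonempty S] {n : ℕ} (hn : 0 < n)
    (p : Fin n → S → ℝ) (hp : ∀ i, p i ∈ stdSimplex ℝ S) (hfs : ∀ i s, 0 < p i s)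
    (q : S → ℝ) (hq : q ∈ stdSimplex ℝ S)
    (x : Fin n → S → ℝ) (hx : ∀ i s, 0 ≤ x i s)
    (hclear : ∀ s, ∑ i, x i s = 1)
    (hopt : ∀ i, ∀ y : S → ℝ, (∀ s, 0 ≤ y s) → ∑ s, q s * y s ≤ 1 / n →
      ∑ s, p i s * y s ≤ ∑ s, p i s * x i s) :
    (∀ i, ∑ s, q s * x i s = 1 / n) ∧
    (∀ i, (fun s => n * (q s * x i s)) ∈ stdSimplex ℝ S) ∧
    (∀ s, (∑ i, n * (q s * x i s)) / n = q s) :=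
  stmt9_general hn p hp q hq x hx hclear hopt
end

section
/- With two states S = {1,2} and n agents with beliefs p_1,…,p_n ∈ [0,1] (the probability of state 1), the equal-wealth parimutuel equilibrium price of state 1 equals the median of the 2n−1 numbers (p_1,…,p_n, 1/n, 2/n, …, (n−1)/n). -/
lemma key {n : ℕ} (hn : 0 < n) (p : Fin n → ℝ) (hp : ∀ i, p i ∈ Set.Icc (0:ℝ) 1)
    (ρ : ℝ) (hρ : ρ ∈ Set.Icc (0:ℝ) 1)
    (x1 x2 : Fin n → ℝ) (hx1 : ∀ i, 0 ≤ x1 i) (hx2 : ∀ i, 0 ≤ x2 i)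
    (hclear1 : ∑ i, x1 i = 1) (hclear2 : ∑ i, x2 i = 1)
    (hopt : ∀ i, ∀ y1 y2 : ℝ, 0 ≤ y1 → 0 ≤ y2 → ρ * y1 + (1 - ρ) * y2 ≤ 1 / n →
      p i * y1 + (1 - p i) * y2 ≤ p i * x1 i + (1 - p i) * x2 i) :
    ((Finset.univ.filter fun i : Fin n => p i < ρ).card +
      ((Finset.range (n - 1)).filter fun k : ℕ => ((k : ℝ) + 1) / n < ρ).card ≤ n - 1) := by
  set A := Finset.univ.filter fun i : Fin n => p i < ρ with hA
  rcases Finset.eq_empty_or_nonempty A with h | ⟨i0, hi0⟩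
  · have : ((Finset.range (n - 1)).filter fun k : ℕ => ((k : ℝ) + 1) / n < ρ).card ≤ n - 1 := by
      calc _ ≤ (Finset.range (n-1)).card := Finset.card_filter_le _ _
        _ = n - 1 := Finset.card_range _
    simp [h, this]
  have hn' : (0:ℝ) < n := by exact_mod_cast hn
  have hi0' : p i0 < ρ := by simpa [hA] using hi0
  have hρ0 : 0 < ρ := lt_of_le_of_lt (hp i0).1 hi0'
  -- ρ < 1
  have hρ1 : ρ < 1 := by
    rcases lt_or_eq_of_le hρ.2 with h | h
    · exact h
    · exfalso
      have hpi : p i0 < 1 := h ▸ hi0'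
      set C := p i0 * x1 i0 + (1 - p i0) * x2 i0 with hC
      have hCnn : 0 ≤ C := add_nonneg (mul_nonneg (hp i0).1 (hx1 i0))
        (mul_nonneg (by linarith [(hp i0).2]) (hx2 i0))
      have hM : (0:ℝ) ≤ (C + 1) / (1 - p i0) := div_nonneg (by linarith) (by linarith)
      have hkey := hopt i0 0 ((C + 1) / (1 - p i0)) le_rfl hM
        (by rw [h]; norm_num)
      have h1 : (1 - p i0) * ((C + 1) / (1 - p i0)) = C + 1 := by
        rw [mul_comm, div_mul_cancel₀ _ (by linarith : (1:ℝ) - p i0 ≠ 0)]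
      rw [h1] at hkey
      rw [← hC] at hkey
      linarith
  have h1ρ : 0 < 1 - ρ := by linarith
  -- key revealed-preference inequality for p i ≤ ρ
  have hrp : ∀ i, p i ≤ ρ →
      (1 - p i) ≤ (n * (1 - ρ)) * (p i * x1 i + (1 - p i) * x2 i) := by
    intro i h
    have hpos : (0:ℝ) < n * (1 - ρ) := by positivity
    have hbud : ρ * 0 + (1 - ρ) * (1 / (n * (1 - ρ))) ≤ 1 / n := by
      rw [mul_one_div, mul_comm (n:ℝ) (1-ρ), ← div_div]
      rw [div_self (ne_of_gt h1ρ)]; norm_num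
    have hu := hopt i 0 (1 / (n * (1 - ρ))) le_rfl (by positivity) hbud
    rw [← div_le_iff₀' hpos]
    calc (1 - p i) / (n * (1 - ρ)) = p i * 0 + (1 - p i) * (1 / (n * (1 - ρ))) := by ring
      _ ≤ _ := hu
  have hrp2 : ∀ i, ρ ≤ p i →
      p i ≤ (n * ρ) * (p i * x1 i + (1 - p i) * x2 i) := by
    intro i h
    have hpos : (0:ℝ) < n * ρ := by positivity
    have hbud : ρ * (1 / (n * ρ)) + (1 - ρ) * 0 ≤ 1 / n := by
      rw [mul_one_div, mul_comm (n:ℝ) ρ, ← div_div]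
      rw [div_self (ne_of_gt hρ0)]; norm_num
    have hu := hopt i (1 / (n * ρ)) 0 (by positivity) le_rfl hbud
    rw [← div_le_iff₀' hpos]
    calc p i / (n * ρ) = p i * (1 / (n * ρ)) + (1 - p i) * 0 := by ring
      _ ≤ _ := hu
  -- cost lower bound
  have hcost_lb : ∀ i, 1 / (n:ℝ) ≤ ρ * x1 i + (1 - ρ) * x2 i := by
    intro i
    have hp0 := (hp i).1; have hp1 := (hp i).2
    rcases le_total (p i) ρ with h | h
    · have hu' := hrp i h
      have hpi1 : 0 < 1 - p i := by linarith
      rw [div_le_iff₀ hn']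
      nlinarith [mul_nonneg (hx1 i) (sub_nonneg.2 h), hx2 i]
    · have hu' := hrp2 i h
      have hpi0 : 0 < p i := lt_of_lt_of_le hρ0 h
      rw [div_le_iff₀ hn']
      nlinarith [mul_nonneg (hx2 i) (sub_nonneg.2 h), hx1 i]
  -- total cost = 1 forces equality everywhere
  have hsum : ∑ i, (ρ * x1 i + (1 - ρ) * x2 i) = 1 := by
    rw [Finset.sum_add_distrib, ← Finset.mul_sum, ← Finset.mul_sum, hclear1, hclear2]
    ring
  have hsumc : ∑ _i : Fin n, (1 / (n:ℝ)) = 1 := by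
    rw [Finset.sum_const, Finset.card_univ, Fintype.card_fin, nsmul_eq_mul]
    field_simp
  have heq : ∀ i, ρ * x1 i + (1 - ρ) * x2 i = 1 / n := by
    intro i
    by_contra hne
    have hlt : 1 / (n:ℝ) < ρ * x1 i + (1 - ρ) * x2 i := lt_of_le_of_ne (hcost_lb i) (Ne.symm hne)
    have : (1:ℝ) < 1 := by
      calc (1:ℝ) = ∑ _i : Fin n, (1 / (n:ℝ)) := hsumc.symm
        _ < ∑ i, (ρ * x1 i + (1 - ρ) * x2 i) :=
          Finset.sum_lt_sum (fun j _ => hcost_lb j) ⟨i, Finset.mem_univ i, hlt⟩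
        _ = 1 := hsum
    linarith
  -- members of A hold exactly x2 = 1/(n(1-ρ))
  have hAx : ∀ i ∈ A, x2 i = 1 / (n * (1 - ρ)) := by
    intro i hi
    have hpi : p i < ρ := by simpa [hA] using hi
    have hp0 := (hp i).1; have hp1 := (hp i).2
    have hu' := hrp i (le_of_lt hpi)
    have hci : (1 - p i) * ((n:ℝ) * (ρ * x1 i + (1 - ρ) * x2 i)) = (1 - p i) * 1 := by
      rw [heq i]; field_simp
    have hx10 : x1 i = 0 := by
      by_contra hne
      have hpos : 0 < x1 i := lt_of_le_of_ne (hx1 i) (Ne.symm hne)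
      nlinarith [hci, hu', mul_pos (mul_pos hn' hpos) (sub_pos.2 hpi)]
    have hci2 := heq i
    rw [hx10] at hci2
    field_simp at hci2 ⊢
    linarith
  -- card bound
  have hcard : (A.card : ℝ) ≤ n * (1 - ρ) := by
    have hle : (A.card : ℝ) * (1 / (n * (1 - ρ))) ≤ 1 := by
      calc (A.card : ℝ) * (1 / (n * (1 - ρ))) = ∑ i ∈ A, x2 i := by
            rw [Finset.sum_congr rfl hAx, Finset.sum_const, nsmul_eq_mul]
        _ ≤ ∑ i, x2 i := Finset.sum_le_sum_of_subset_of_nonneg (Finset.subset_univ A)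
            (fun j _ _ => hx2 j)
        _ = 1 := hclear2
    have hpos : (0:ℝ) < n * (1 - ρ) := by positivity
    rw [mul_one_div, div_le_one hpos] at hle
    exact hle
  have haltn : A.card < n := by
    have : (A.card : ℝ) < n := lt_of_le_of_lt hcard (by nlinarith)
    exact_mod_cast this
  -- second filter bound
  have hsub : ((Finset.range (n - 1)).filter fun k : ℕ => ((k : ℝ) + 1) / n < ρ)
      ⊆ Finset.range (n - 1 - A.card) := by
    intro k hk
    simp only [Finset.mem_filter, Finset.mem_range] at hk ⊢
    obtain ⟨hk1, hk2⟩ := hk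
    have h3 : ((k:ℝ) + 1) < n * ρ := by
      rw [div_lt_iff₀ hn'] at hk2; linarith
    have : ((k:ℝ) + 1) + A.card < n := by nlinarith
    have : (k + 1 + A.card : ℕ) < n := by exact_mod_cast this
    omega
  have := Finset.card_le_card hsub
  rw [Finset.card_range] at this
  omega

/-- with two states and `n` risk-neutral agents with beliefs
`p i ∈ [0,1]` (probability of state 1), the equal-wealth parimutuel equilibrium
price `ρ` of state 1 is the median of the `2n−1` numbers
`p 1, …, p n, 1/n, …, (n−1)/n`: at most `n−1` of them are strictly below `ρ`
and at most `n−1` strictly above. -/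
theorem stmt10 {n : ℕ} (hn : 0 < n) (p : Fin n → ℝ) (hp : ∀ i, p i ∈ Set.Icc (0:ℝ) 1)
    (ρ : ℝ) (hρ : ρ ∈ Set.Icc (0:ℝ) 1)
    (x1 x2 : Fin n → ℝ) (hx1 : ∀ i, 0 ≤ x1 i) (hx2 : ∀ i, 0 ≤ x2 i)
    (hclear1 : ∑ i, x1 i = 1) (hclear2 : ∑ i, x2 i = 1)
    (hopt : ∀ i, ∀ y1 y2 : ℝ, 0 ≤ y1 → 0 ≤ y2 → ρ * y1 + (1 - ρ) * y2 ≤ 1 / n →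
      p i * y1 + (1 - p i) * y2 ≤ p i * x1 i + (1 - p i) * x2 i) :
    ((Finset.univ.filter fun i : Fin n => p i < ρ).card +
      ((Finset.range (n - 1)).filter fun k : ℕ => ((k : ℝ) + 1) / n < ρ).card ≤ n - 1) ∧
    ((Finset.univ.filter fun i : Fin n => ρ < p i).card +
      ((Finset.range (n - 1)).filter fun k : ℕ => ρ < ((k : ℝ) + 1) / n).card ≤ n - 1) := by
  constructor
  · exact key hn p hp ρ hρ x1 x2 hx1 hx2 hclear1 hclear2 hopt
  · have h2 := key hn (fun i => 1 - p i)
      (fun i => by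
        simp only [Set.mem_Icc]
        exact ⟨by linarith [(hp i).2], by linarith [(hp i).1]⟩)
      (1 - ρ) (by
        simp only [Set.mem_Icc]
        exact ⟨by linarith [hρ.2], by linarith [hρ.1]⟩)
      x2 x1 hx2 hx1 hclear2 hclear1
      (fun i y1 y2 h1 h2 hb => by
        have := hopt i y2 y1 h2 h1 (by linarith)
        simp only [sub_sub_cancel]
        linarith)
    have e1 : (Finset.univ.filter fun i : Fin n => (fun i => 1 - p i) i < 1 - ρ)
        = Finset.univ.filter fun i : Fin n => ρ < p i := by
      apply Finset.filter_congr
      intro i _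
      simp only []
      constructor <;> intro h <;> [linarith; linarith]
    have e2 : ((Finset.range (n - 1)).filter fun k : ℕ => ((k : ℝ) + 1) / n < 1 - ρ).card
        = ((Finset.range (n - 1)).filter fun k : ℕ => ρ < ((k : ℝ) + 1) / n).card := by
      have hn' : (0:ℝ) < n := by exact_mod_cast hn
      apply Finset.card_bij (fun k _ => n - 2 - k)
      · intro k hk
        simp only [Finset.mem_filter, Finset.mem_range] at hk ⊢
        obtain ⟨hk1, hk2⟩ := hk
        have h2n : 2 ≤ n := by omega
        have hcast : ((n - 2 - k : ℕ) : ℝ) = (n:ℝ) - 2 - k := by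
          push_cast [Nat.cast_sub (by omega : k ≤ n - 2), Nat.cast_sub h2n]
          ring
        refine ⟨by omega, ?_⟩
        rw [hcast, lt_div_iff₀ hn']
        rw [div_lt_iff₀ hn'] at hk2
        nlinarith
      · intro a ha b hb hab
        simp only [Finset.mem_filter, Finset.mem_range] at ha hb
        omega
      · intro b hb
        simp only [Finset.mem_filter, Finset.mem_range] at hb
        obtain ⟨hb1, hb2⟩ := hb
        have h2n : 2 ≤ n := by omega
        refine ⟨n - 2 - b, ?_, by omega⟩
        simp only [Finset.mem_filter, Finset.mem_range]
        have hcast : ((n - 2 - b : ℕ) : ℝ) = (n:ℝ) - 2 - b := by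
          push_cast [Nat.cast_sub (by omega : b ≤ n - 2), Nat.cast_sub h2n]
          ring
        refine ⟨by omega, ?_⟩
        rw [hcast, div_lt_iff₀ hn']
        rw [lt_div_iff₀ hn'] at hb2
        nlinarith
    rw [e1, e2] at h2
    exact h2
end

section
/- The equal-wealth parimutuel price rule satisfies Recursive Invariance: if ρ is the equilibrium price for beliefs (p_1,…,p_n) and q_i = λ_i p_i + (1−λ_i)ρ with λ_i ∈ [0,1] for each i, then ρ is also the equilibrium price for beliefs (q_1,…,q_n), supported by the same allocation. -/
/-! Mixing a belief with the price preserves the first-order conditions of the equilibrium: on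
the support of agent `i`'s allocation `p_i = ρ / α_i`, so `q_i = (λ_i / α_i + 1 - λ_i) ρ` is again
proportional to `ρ`, which forces the new multiplier `α_i / (λ_i + (1 - λ_i) α_i)`; off the
support, `α_i p_i ≤ ρ` gives the inequality for `q_i` with that same multiplier. -/

section Mixing

variable {K : Type*} [Field K] [LinearOrder K] [IsStrictOrderedRing K]

def mixedMultiplier (α lam : K) : K := α / (lam + (1 - lam) * α)

lemma mixedMultiplier_denom_pos {α lam : K} (hα : 0 < α) (hlam : lam ∈ Set.Icc (0 : K) 1) :
    0 < lam + (1 - lam) * α := by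
  obtain ⟨h0, h1⟩ := hlam
  rcases h0.eq_or_lt with rfl | h0
  · simpa using hα
  · nlinarith

lemma mixedMultiplier_pos {α lam : K} (hα : 0 < α) (hlam : lam ∈ Set.Icc (0 : K) 1) :
    0 < mixedMultiplier α lam :=
  div_pos hα (mixedMultiplier_denom_pos hα hlam)

lemma mixedMultiplier_mul_le {α lam p ρ : K} (hα : 0 < α) (hlam : lam ∈ Set.Icc (0 : K) 1)
    (h : α * p ≤ ρ) : mixedMultiplier α lam * (lam * p + (1 - lam) * ρ) ≤ ρ := by
  have hd := mixedMultiplier_denom_pos hα hlam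
  rw [mixedMultiplier, div_mul_eq_mul_div, div_le_iff₀ hd]
  have : lam * (α * p) ≤ lam * ρ := mul_le_mul_of_nonneg_left h hlam.1
  linarith

lemma mixedMultiplier_mul_eq {α lam p ρ : K} (hα : 0 < α) (hlam : lam ∈ Set.Icc (0 : K) 1)
    (h : ρ = α * p) : ρ = mixedMultiplier α lam * (lam * p + (1 - lam) * ρ) := by
  have hd := mixedMultiplier_denom_pos hα hlam
  rw [mixedMultiplier, div_mul_eq_mul_div, eq_div_iff hd.ne', h]
  ring

end Mixing

theorem stmt16_general {S : Type*} {n : ℕ}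
    (p : Fin n → S → ℝ)
    (ρ : S → ℝ)
    (x : Fin n → S → ℝ)
    (α : Fin n → ℝ) (hα : ∀ i, 0 < α i)
    (hineq : ∀ i s, α i * p i s ≤ ρ s)
    (heq : ∀ i s, 0 < x i s → ρ s = α i * p i s)
    (lam : Fin n → ℝ) (hlam : ∀ i, lam i ∈ Set.Icc (0:ℝ) 1)
    (q : Fin n → S → ℝ)
    (hqdef : ∀ i s, q i s = lam i * p i s + (1 - lam i) * ρ s) :
    ∃ α' : Fin n → ℝ, (∀ i, 0 < α' i) ∧
      (∀ i s, α' i * q i s ≤ ρ s) ∧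
      (∀ i s, 0 < x i s → ρ s = α' i * q i s) := by
  refine ⟨fun i => mixedMultiplier (α i) (lam i), fun i => mixedMultiplier_pos (hα i) (hlam i),
    fun i s => ?_, fun i s hxs => ?_⟩
  · rw [hqdef]
    exact mixedMultiplier_mul_le (hα i) (hlam i) (hineq i s)
  · rw [hqdef]
    exact mixedMultiplier_mul_eq (hα i) (hlam i) (heq i s hxs)

/-- the equal-wealth parimutuel price rule satisfies Recursive
Invariance: if `ρ` is an equilibrium price for beliefs `p`, witnessed by an
allocation `x` and multipliers `α`, then for beliefs
`q i = λ i • p i + (1 − λ i) • ρ` the same `ρ` is an equilibrium price,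
supported by the same allocation `x` (with new multipliers). -/
theorem stmt16 {S : Type*} [Fintype S] [Nonempty S] {n : ℕ} (hn : 0 < n)
    (p : Fin n → S → ℝ) (hp : ∀ i, p i ∈ stdSimplex ℝ S)
    (ρ : S → ℝ) (hρ : ρ ∈ stdSimplex ℝ S)
    (x : Fin n → S → ℝ) (hx : ∀ i s, 0 ≤ x i s)
    (hclear : ∀ s, ∑ i, x i s = 1)
    (hbudget : ∀ i, ∑ s, ρ s * x i s = 1 / n)
    (α : Fin n → ℝ) (hα : ∀ i, 0 < α i)
    (hineq : ∀ i s, α i * p i s ≤ ρ s)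
    (heq : ∀ i s, 0 < x i s → ρ s = α i * p i s)
    (lam : Fin n → ℝ) (hlam : ∀ i, lam i ∈ Set.Icc (0:ℝ) 1)
    (q : Fin n → S → ℝ)
    (hqdef : ∀ i s, q i s = lam i * p i s + (1 - lam i) * ρ s) :
    ∃ α' : Fin n → ℝ, (∀ i, 0 < α' i) ∧
      (∀ i s, α' i * q i s ≤ ρ s) ∧
      (∀ i s, 0 < x i s → ρ s = α' i * q i s) :=
  stmt16_general p ρ x α hα hineq heq lam hlam q hqdef
end

section
/- With two states and n agents where agents 1,…,n−1 share belief p and agent n has belief p_n with 0 < p < p_n < 1/n, the equal-wealth parimutuel equilibrium price of state 1 is p_n; hence the parimutuel price rule violates No Veto Power. -/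
/-!
Each agent solves a linear two-good problem with budget `1/n`, so she spends her whole budget on
the state whose belief-to-price ratio is larger. In particular every agent spends at least `1/n`;
since market clearing makes total spending `1`, every agent spends exactly `1/n`. If the price
`ρ` of state 1 exceeded `pn`, every agent would buy only state 2 and state 1 could not clear. If
`ρ < pn`, agent `i0` would spend all of `1/n > pn > ρ` on state 1, i.e. buy more than the whole
supply `1` of it.
-/

/-- `(x₁, x₂)` is an optimal bundle for an agent with belief `q` and budget `w` at prices
`(ρ, 1 - ρ)`. -/
def IsBestBundle (ρ w q x₁ x₂ : ℝ) : Prop :=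
  ∀ y₁ y₂ : ℝ, 0 ≤ y₁ → 0 ≤ y₂ → ρ * y₁ + (1 - ρ) * y₂ ≤ w →
    q * y₁ + (1 - q) * y₂ ≤ q * x₁ + (1 - q) * x₂

namespace IsBestBundle

variable {ρ w q x₁ x₂ : ℝ}

theorem swap (h : IsBestBundle ρ w q x₁ x₂) : IsBestBundle (1 - ρ) w (1 - q) x₂ x₁ := by
  intro y₁ y₂ hy₁ hy₂ hcost
  linarith [h y₂ y₁ hy₂ hy₁ (by linarith)]

theorem price_pos (h : IsBestBundle ρ w q x₁ x₂) (hq : 0 < q) (hw : 0 ≤ w) : 0 < ρ := by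
  by_contra! hρ
  set v := q * x₁ + (1 - q) * x₂
  have hv := h ((|v| + 1) / q) 0 (by positivity) le_rfl
    (by nlinarith [show 0 ≤ (|v| + 1) / q by positivity])
  rw [mul_div_cancel₀ _ hq.ne'] at hv
  linarith [le_abs_self v]

theorem price_lt_one (h : IsBestBundle ρ w q x₁ x₂) (hq : q < 1) (hw : 0 ≤ w) : ρ < 1 := by
  linarith [h.swap.price_pos (by linarith) hw]

/-- Comparison with the bundle that spends the whole budget on state 1. -/
theorem mul_budget_le (h : IsBestBundle ρ w q x₁ x₂) (hρ : 0 < ρ) (hw : 0 ≤ w) :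
    q * w ≤ ρ * (q * x₁ + (1 - q) * x₂) := by
  have hv := h (w / ρ) 0 (by positivity) le_rfl (by rw [mul_div_cancel₀ _ hρ.ne']; simp)
  rw [mul_zero, add_zero, mul_div_assoc', div_le_iff₀ hρ] at hv
  linarith

theorem budget_le_spend_of_price_le (h : IsBestBundle ρ w q x₁ x₂) (hρ : 0 < ρ)
    (hρq : ρ ≤ q) (hx₂ : 0 ≤ x₂) (hw : 0 ≤ w) : w ≤ ρ * x₁ + (1 - ρ) * x₂ := by
  have hv := h.mul_budget_le hρ hw
  have hq : 0 < q := hρ.trans_le hρq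
  have hcross : (ρ * (1 - q)) * x₂ ≤ (q * (1 - ρ)) * x₂ :=
    mul_le_mul_of_nonneg_right (by linarith) hx₂
  have hscaled : q * w ≤ q * (ρ * x₁ + (1 - ρ) * x₂) := by linarith
  exact le_of_mul_le_mul_left hscaled hq

theorem budget_le_spend (h : IsBestBundle ρ w q x₁ x₂) (hρ₀ : 0 < ρ) (hρ₁ : ρ < 1)
    (hx₁ : 0 ≤ x₁) (hx₂ : 0 ≤ x₂) (hw : 0 ≤ w) : w ≤ ρ * x₁ + (1 - ρ) * x₂ := by
  rcases le_total ρ q with hρq | hqρ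
  · exact h.budget_le_spend_of_price_le hρ₀ hρq hx₂ hw
  · linarith [h.swap.budget_le_spend_of_price_le (by linarith) (by linarith) hx₁ hw]

theorem eq_zero_of_price_lt (h : IsBestBundle ρ w q x₁ x₂) (hρ : 0 < ρ) (hρq : ρ < q)
    (hx₂ : 0 ≤ x₂) (hw : 0 ≤ w) (hspend : ρ * x₁ + (1 - ρ) * x₂ ≤ w) : x₂ = 0 := by
  have hv := h.mul_budget_le hρ hw
  have hq : 0 < q := hρ.trans hρq
  have hgap : (q - ρ) * x₂ ≤ 0 := by nlinarith
  exact le_antisymm (nonpos_of_mul_nonpos_right hgap (by linarith)) hx₂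

theorem eq_zero_of_lt_price (h : IsBestBundle ρ w q x₁ x₂) (hρ : ρ < 1) (hqρ : q < ρ)
    (hx₁ : 0 ≤ x₁) (hw : 0 ≤ w) (hspend : ρ * x₁ + (1 - ρ) * x₂ ≤ w) : x₁ = 0 :=
  h.swap.eq_zero_of_price_lt (by linarith) (by linarith) hx₁ hw (by linarith)

end IsBestBundle

theorem spend_eq_of_market_clearing {ι : Type*} [Fintype ι] {ρ : ℝ} {x₁ x₂ w : ι → ℝ}
    (hclear₁ : ∑ i, x₁ i = 1) (hclear₂ : ∑ i, x₂ i = 1) (hw : ∑ i, w i = 1)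
    (hle : ∀ i, w i ≤ ρ * x₁ i + (1 - ρ) * x₂ i) (i : ι) :
    ρ * x₁ i + (1 - ρ) * x₂ i = w i := by
  have htotal : ∑ i, (ρ * x₁ i + (1 - ρ) * x₂ i) = 1 := by
    rw [Finset.sum_add_distrib, ← Finset.mul_sum, ← Finset.mul_sum, hclear₁, hclear₂]
    ring
  exact ((Finset.sum_eq_sum_iff_of_le fun i _ => hle i).mp (by rw [hw, htotal])
    i (Finset.mem_univ i)).symm

theorem stmt18_general {n : ℕ}
    (b : Fin n → ℝ) (i0 : Fin n) (bp pn : ℝ)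
    (hb : ∀ j, j ≠ i0 → b j = bp) (hbi : b i0 = pn)
    (hbp : 0 < bp) (hlt : bp < pn) (hup : pn < 1 / n)
    (ρ : ℝ)
    (x1 x2 : Fin n → ℝ) (hx1 : ∀ i, 0 ≤ x1 i) (hx2 : ∀ i, 0 ≤ x2 i)
    (hclear1 : ∑ i, x1 i = 1) (hclear2 : ∑ i, x2 i = 1)
    (hopt : ∀ i, ∀ y1 y2 : ℝ, 0 ≤ y1 → 0 ≤ y2 → ρ * y1 + (1 - ρ) * y2 ≤ 1 / n →
      b i * y1 + (1 - b i) * y2 ≤ b i * x1 i + (1 - b i) * x2 i) :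
    ρ = pn ∧ ρ ≠ bp := by
  have hbest : ∀ i, IsBestBundle ρ (1 / n) (b i) (x1 i) (x2 i) := hopt
  have hn : (1 : ℝ) ≤ n := by exact_mod_cast i0.pos
  have hw : (0 : ℝ) ≤ 1 / n := by positivity
  have hb_le : ∀ i, b i ≤ pn := fun i => by
    by_cases hi : i = i0
    · rw [hi, hbi]
    · rw [hb i hi]; exact hlt.le
  have hρ₀ : 0 < ρ := (hbest i0).price_pos (by linarith) hw
  have hpn₁ : pn < 1 := hup.trans_le (div_le_one_of_le₀ hn n.cast_nonneg)
  have hρ₁ : ρ < 1 := (hbest i0).price_lt_one (by rwa [hbi]) hw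
  have hbudgets : ∑ _ : Fin n, (1 : ℝ) / n = 1 := by
    simp [mul_inv_cancel₀ (by positivity : (n : ℝ) ≠ 0)]
  have hspend : ∀ i, ρ * x1 i + (1 - ρ) * x2 i = 1 / n :=
    spend_eq_of_market_clearing hclear1 hclear2 hbudgets
      fun i => (hbest i).budget_le_spend hρ₀ hρ₁ (hx1 i) (hx2 i) hw
  have hρ_le : ρ ≤ pn := by
    by_contra! hpnρ
    have hx1_zero : ∀ i, x1 i = 0 := fun i =>
      (hbest i).eq_zero_of_lt_price hρ₁ ((hb_le i).trans_lt hpnρ) (hx1 i) hw (hspend i).le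
    simp [hx1_zero] at hclear1
  have hpn_le : pn ≤ ρ := by
    by_contra! hρpn
    have hx2_zero : x2 i0 = 0 :=
      (hbest i0).eq_zero_of_price_lt hρ₀ (by rwa [hbi]) (hx2 i0) hw (hspend i0).le
    have hx1_le : x1 i0 ≤ 1 :=
      hclear1 ▸ Finset.single_le_sum (fun i _ => hx1 i) (Finset.mem_univ i0)
    have hspend₀ := hspend i0
    rw [hx2_zero] at hspend₀
    nlinarith
  exact ⟨le_antisymm hρ_le hpn_le, by linarith⟩

/-- with two states and `n` agents where all agents except `i0`
share the belief `bp` and agent `i0` has belief `pn` with `0 < bp < pn < 1/n`,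
any equal-wealth parimutuel equilibrium price of state 1 equals `pn`, and in
particular differs from `bp`: the parimutuel rule violates No Veto Power. -/
theorem stmt18 {n : ℕ} (hn : 2 ≤ n)
    (b : Fin n → ℝ) (i0 : Fin n) (bp pn : ℝ)
    (hb : ∀ j, j ≠ i0 → b j = bp) (hbi : b i0 = pn)
    (hbp : 0 < bp) (hlt : bp < pn) (hup : pn < 1 / n)
    (ρ : ℝ) (hρ : ρ ∈ Set.Icc (0:ℝ) 1)
    (x1 x2 : Fin n → ℝ) (hx1 : ∀ i, 0 ≤ x1 i) (hx2 : ∀ i, 0 ≤ x2 i)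
    (hclear1 : ∑ i, x1 i = 1) (hclear2 : ∑ i, x2 i = 1)
    (hopt : ∀ i, ∀ y1 y2 : ℝ, 0 ≤ y1 → 0 ≤ y2 → ρ * y1 + (1 - ρ) * y2 ≤ 1 / n →
      b i * y1 + (1 - b i) * y2 ≤ b i * x1 i + (1 - b i) * x2 i) :
    ρ = pn ∧ ρ ≠ bp :=
  stmt18_general b i0 bp pn hb hbi hbp hlt hup ρ x1 x2 hx1 hx2 hclear1 hclear2 hopt
end

section
/- For any profile of full-support beliefs p_1,…,p_n ∈ Δ(S), the truthful profile (p_1,…,p_n) with each agent reporting ρ_i = p_i is a Nash equilibrium of the log-utility revelation game under the symmetric linear opinion pool if and only if all beliefs are equal: p_1 = p_2 = ⋯ = p_n. -/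
/-!
If all beliefs equal `q`, the pool after agent `i` deviates to `r` is still a probability vector,
and Gibbs' inequality `∑ q log x ≤ ∑ q log q` shows no deviation helps.

Conversely, at a truthful equilibrium with pool `A`, agent `i` may move a small mass `ε` of either
sign from state `t` to state `s` (full support keeps the report in the simplex). Since
`ε ↦ ∑ p_i log (A + ε (e_s - e_t) / n)` has a local maximum at `0`, its derivative
`(p_i s / A s - p_i t / A t) / n` vanishes, so `p_i` is proportional to `A`; both are
probability vectors, hence `p_i = A` for every `i`.
-/

open Finset Real Filter Topology

lemma EReal.coe_sum {ι : Type*} (s : Finset ι) (f : ι → ℝ) :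
    ((∑ i ∈ s, f i : ℝ) : EReal) = ∑ i ∈ s, (f i : EReal) :=
  map_sum (⟨⟨Real.toEReal, EReal.coe_zero⟩, EReal.coe_add⟩ : ℝ →+ EReal) f s

lemma mul_log_le_mul_log_add_sub {q y : ℝ} (hq : 0 ≤ q) (hy : 0 ≤ y) (h : y = 0 → q = 0) :
    q * log y ≤ q * log q + (y - q) := by
  rcases hq.eq_or_lt with rfl | hq
  · simpa using hy
  have hy : 0 < y := hy.lt_of_ne fun hy => hq.ne' (h hy.symm)
  have hlog := log_le_sub_one_of_pos (div_pos hy hq)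
  rw [log_div hy.ne' hq.ne'] at hlog
  have hmul := mul_le_mul_of_nonneg_left hlog hq.le
  rw [mul_sub, mul_sub, mul_div_cancel₀ _ hq.ne'] at hmul
  linarith

section payE

variable {S : Type*} [Fintype S] {p x : S → ℝ}

theorem sum_mul_log_le_sum_mul_log (hp : p ∈ stdSimplex ℝ S) (hx : x ∈ stdSimplex ℝ S)
    (h : ∀ u, x u = 0 → p u = 0) : ∑ u, p u * log (x u) ≤ ∑ u, p u * log (p u) :=
  calc ∑ u, p u * log (x u) ≤ ∑ u, (p u * log (p u) + (x u - p u)) :=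
        sum_le_sum fun u _ => mul_log_le_mul_log_add_sub (hp.1 u) (hx.1 u) (h u)
    _ = ∑ u, p u * log (p u) := by simp [sum_add_distrib, hp.2, hx.2]

lemma payE_eq_coe_s19 (h : ∀ u, x u = 0 → p u = 0) :
    payE p x = ((∑ u, p u * log (x u) : ℝ) : EReal) := by
  rw [payE, EReal.coe_sum]
  exact sum_congr rfl fun u _ => if_neg fun ⟨hx, hp⟩ => hp (h u hx)

lemma payE_eq_bot_s19 {u : S} (hx : x u = 0) (hp : p u ≠ 0) : payE p x = ⊥ := by
  classical
  rw [payE, ← add_sum_erase _ _ (mem_univ u), if_pos ⟨hx, hp⟩, EReal.bot_add]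

theorem payE_le_payE_self (hp : p ∈ stdSimplex ℝ S) (hx : x ∈ stdSimplex ℝ S) :
    payE p x ≤ payE p p := by
  by_cases h : ∀ u, x u = 0 → p u = 0
  · rw [payE_eq_coe_s19 h, payE_eq_coe_s19 fun _ => id, EReal.coe_le_coe_iff]
    exact sum_mul_log_le_sum_mul_log hp hx h
  · push Not at h
    obtain ⟨u, hx, hp⟩ := h
    rw [payE_eq_bot_s19 hx hp]
    exact bot_le

end payE

theorem IsLocalMax.sum_div_mul_eq_zero_of_sum_mul_log {S : Type*} [Fintype S] {q a d : S → ℝ}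
    (ha : ∀ u, 0 < a u) (h : IsLocalMax (fun ε => ∑ u, q u * log (a u + ε * d u)) 0) :
    ∑ u, q u / a u * d u = 0 := by
  refine h.hasDerivAt_eq_zero (HasDerivAt.fun_sum fun u _ => ?_)
  have hlin : HasDerivAt (fun ε => a u + ε * d u) (d u) 0 :=
    (hasDerivAt_mul_const (d u)).const_add (a u)
  refine ((hlin.log (by simpa using (ha u).ne')).const_mul (q u)).congr_deriv ?_
  simp only [zero_mul, add_zero]
  ring

lemma eq_of_mul_eq_mul_of_mem_stdSimplex {S : Type*} [Fintype S] {q a : S → ℝ}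
    (hq : q ∈ stdSimplex ℝ S) (ha : a ∈ stdSimplex ℝ S)
    (h : ∀ s t, q s * a t = q t * a s) : q = a := by
  funext s
  simpa [← mul_sum, ← sum_mul, hq.2, ha.2] using sum_congr rfl fun t (_ : t ∈ univ) => h s t

section linearPool

variable {S : Type*} {n : ℕ}

noncomputable def linearPool (ρ : Fin n → S → ℝ) : S → ℝ := fun s => (∑ j, ρ j s) / n

def IsNashEquilibrium [Fintype S] (p ρ : Fin n → S → ℝ) : Prop :=
  ∀ i, ∀ r ∈ stdSimplex ℝ S,
    payE (p i) (linearPool (Function.update ρ i r)) ≤ payE (p i) (linearPool ρ)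

lemma linearPool_update_apply (ρ : Fin n → S → ℝ) (i : Fin n) (r : S → ℝ) (u : S) :
    linearPool (Function.update ρ i r) u = linearPool ρ u + (r u - ρ i u) / n := by
  rw [linearPool, linearPool, ← Finset.sum_apply, ← Finset.sum_apply,
    sum_update_of_mem (mem_univ i), sum_eq_add_sum_sdiff_singleton_of_mem (mem_univ i) ρ]
  simp only [Pi.add_apply]
  ring

lemma linearPool_const (hn : n ≠ 0) (q : S → ℝ) : linearPool (fun _ : Fin n => q) = q := by
  funext u
  simp [linearPool, hn]

lemma linearPool_pos (hn : 0 < n) {ρ : Fin n → S → ℝ} (hρ : ∀ j u, 0 < ρ j u) (u : S) :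
    0 < linearPool ρ u := by
  have : Nonempty (Fin n) := Fin.pos_iff_nonempty.mp hn
  exact div_pos (sum_pos (fun j _ => hρ j u) univ_nonempty) (by positivity)

lemma linearPool_mem_stdSimplex [Fintype S] (hn : n ≠ 0) {ρ : Fin n → S → ℝ}
    (hρ : ∀ j, ρ j ∈ stdSimplex ℝ S) : linearPool ρ ∈ stdSimplex ℝ S := by
  refine ⟨fun u => div_nonneg (sum_nonneg fun j _ => (hρ j).1 u) n.cast_nonneg, ?_⟩
  simp [linearPool, ← sum_div, sum_comm (γ := S), (hρ _).2, hn]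

end linearPool

namespace IsNashEquilibrium

variable {S : Type*} [Fintype S] {n : ℕ} {p : Fin n → S → ℝ}

theorem isLocalMax (hn : 0 < n) (hp : ∀ j, p j ∈ stdSimplex ℝ S) (hpos : ∀ j u, 0 < p j u)
    (h : IsNashEquilibrium p p) (i : Fin n) {d : S → ℝ} (hd : ∑ u, d u = 0) :
    IsLocalMax (fun ε => ∑ u, p i u * log (linearPool p u + ε * (d u / n))) 0 := by
  have hr : ∀ᶠ ε in 𝓝 (0 : ℝ), ∀ u, 0 < p i u + ε * d u :=
    eventually_all.2 fun u => Tendsto.eventually_const_lt (by simpa using hpos i u)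
      (Continuous.tendsto (by fun_prop) 0)
  filter_upwards [hr] with ε hε
  set r : S → ℝ := fun u => p i u + ε * d u
  have hr_mem : r ∈ stdSimplex ℝ S :=
    ⟨fun u => (hε u).le, by simp [r, sum_add_distrib, ← mul_sum, hd, (hp i).2]⟩
  have hpool_pos : ∀ u, 0 < linearPool (Function.update p i r) u :=
    linearPool_pos hn <| (Function.forall_update_iff p fun _ v => ∀ u, 0 < v u).2
      ⟨hε, fun j _ => hpos j⟩
  have hpool : linearPool (Function.update p i r) = fun u => linearPool p u + ε * (d u / n) := by
    funext u
    rw [linearPool_update_apply]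
    simp only [r]
    ring
  have hle := h i r hr_mem
  rw [payE_eq_coe_s19 fun u hu => absurd hu (hpool_pos u).ne',
    payE_eq_coe_s19 fun u hu => absurd hu (linearPool_pos hn hpos u).ne', EReal.coe_le_coe_iff,
    hpool] at hle
  simpa using hle

theorem eq_linearPool (hn : 0 < n) (hp : ∀ j, p j ∈ stdSimplex ℝ S)
    (hpos : ∀ j u, 0 < p j u) (h : IsNashEquilibrium p p) (i : Fin n) : p i = linearPool p := by
  classical
  refine eq_of_mul_eq_mul_of_mem_stdSimplex (hp i) (linearPool_mem_stdSimplex hn.ne' hp)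
    fun s t => ?_
  have hfoc := (h.isLocalMax hn hp hpos i (d := Pi.single s 1 - Pi.single t 1)
    (by simp)).sum_div_mul_eq_zero_of_sum_mul_log (linearPool_pos hn hpos)
  simp only [Pi.sub_apply, Pi.single_apply, sub_div, ite_div, one_div, zero_div, mul_sub,
    mul_ite, mul_zero, sum_sub_distrib, sum_ite_eq', mem_univ, ↓reduceIte] at hfoc
  rw [← sub_mul, mul_eq_zero, inv_eq_zero, Nat.cast_eq_zero, sub_eq_zero,
    div_eq_div_iff (linearPool_pos hn hpos s).ne' (linearPool_pos hn hpos t).ne'] at hfoc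
  exact hfoc.resolve_right hn.ne'

end IsNashEquilibrium

theorem stmt19_general {S : Type*} [Fintype S] {n : ℕ} (hn : 0 < n)
    (p : Fin n → S → ℝ) (hp : ∀ i, p i ∈ stdSimplex ℝ S) (hfs : ∀ i s, 0 < p i s) :
    (∀ i : Fin n, ∀ r ∈ stdSimplex ℝ S,
      payE (p i) (fun s => (∑ j, Function.update p i r j s) / n) ≤
        payE (p i) (fun s => (∑ j, p j s) / n)) ↔
    ∀ i j, p i = p j := by
  show IsNashEquilibrium p p ↔ _
  constructor
  · intro h i j
    rw [h.eq_linearPool hn hp hfs i, h.eq_linearPool hn hp hfs j]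
  · intro hall i r hr
    have hpool : linearPool p = p i :=
      (congrArg linearPool (funext fun j => hall j i)).trans (linearPool_const hn.ne' _)
    rw [hpool]
    exact payE_le_payE_self (hp i) <| linearPool_mem_stdSimplex hn.ne' <|
      (Function.forall_update_iff p fun _ v => v ∈ stdSimplex ℝ S).2 ⟨hr, fun j _ => hp j⟩

/-- for full-support beliefs, truthful reporting is a Nash
equilibrium of the log-utility revelation game under the symmetric linear
opinion pool iff all beliefs coincide. -/
theorem stmt19 {S : Type*} [Fintype S] [Nonempty S] {n : ℕ} (hn : 0 < n)
    (p : Fin n → S → ℝ) (hp : ∀ i, p i ∈ stdSimplex ℝ S) (hfs : ∀ i s, 0 < p i s) :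
    (∀ i : Fin n, ∀ r ∈ stdSimplex ℝ S,
      payE (p i) (fun s => (∑ j, Function.update p i r j s) / n) ≤
        payE (p i) (fun s => (∑ j, p j s) / n)) ↔
    ∀ i j, p i = p j :=
  stmt19_general hn p hp hfs
end
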